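/- Shrinkage factor for moderate signals (Proposition 1(b), known-variance form). Fix ε > 0 with ε < a/2. There exist constants γ > 0 and C > 0, depending only on σ, b and ε, such that for every integer p ≥ 2, every τ > 0, and every d ∈ ℝ with |d| ≤ (a/2 − ε)·√(τ (log p)/2), the random variable X ~ N(d, στ) satisfies E[q(X)] ≤ C·p^{−γ}. -/

import Mathlib

open MeasureTheory ProbabilityTheory

/-- The constant `a = (2+b)√σ + √((2+b)²σ + 4)` from Proposition 1. -/
noncomputable def shrinkA (σ b : ℝ) : ℝ :=
  (2 + b) * Real.sqrt σ + Real.sqrt ((2 + b) ^ 2 * σ + 4)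

/-- The shrinkage factor `q(x) = g₁(|x|)/(g₀(|x|) + g₁(|x|))`, where `g₀` is the density of
`N(0, τ)` and `g₁` is the density of `N(a·√(τ log p / 2), τ)`. -/
noncomputable def shrinkQ (σ b : ℝ) (p : ℕ) (τ : ℝ) (x : ℝ) : ℝ :=
  gaussianPDFReal (shrinkA σ b * Real.sqrt (τ * Real.log p / 2)) τ.toNNReal |x| /
    (gaussianPDFReal 0 τ.toNNReal |x| +
      gaussianPDFReal (shrinkA σ b * Real.sqrt (τ * Real.log p / 2)) τ.toNNReal |x|)

/-!
On `|x| ≤ t := (a/2 - ε/2)·√(τ log p/2)` the factor `q(x) ≤ g₁(|x|)/g₀(|x|)` is at most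
`p^(-aε/4)`, and `q ≤ 1` everywhere. Since `|d| ≤ t - (ε/2)·√(τ log p/2)`, the event `|X| > t`
forces `|X - d| ≥ (ε/2)·√(τ log p/2)`, which the Chernoff bound for the sub-Gaussian variable
`X - d` makes as unlikely as `2 p^(-ε²/(16σ))`.
-/

open Real

lemma ProbabilityTheory.HasSubgaussianMGF.measureReal_abs_ge_le {Ω : Type*}
    {m : MeasurableSpace Ω} {μ : Measure Ω} {X : Ω → ℝ} {c : NNReal} (h : HasSubgaussianMGF X c μ)
    {r : ℝ} (hr : 0 ≤ r) : μ.real {ω | r ≤ |X ω|} ≤ 2 * exp (-r ^ 2 / (2 * c)) := by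
  have h_union : {ω | r ≤ |X ω|} = {ω | r ≤ X ω} ∪ {ω | r ≤ (-X) ω} := by
    ext ω
    simp [le_abs', or_comm, le_neg]
  calc μ.real {ω | r ≤ |X ω|} ≤ μ.real {ω | r ≤ X ω} + μ.real {ω | r ≤ (-X) ω} :=
        h_union ▸ measureReal_union_le _ _
    _ ≤ exp (-r ^ 2 / (2 * c)) + exp (-r ^ 2 / (2 * c)) :=
        add_le_add (h.measure_ge_le hr) (h.neg.measure_ge_le hr)
    _ = 2 * exp (-r ^ 2 / (2 * c)) := by ring

lemma hasSubgaussianMGF_sub_gaussianReal (μ : ℝ) (v : NNReal) :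
    HasSubgaussianMGF (fun x ↦ x - μ) v (gaussianReal μ v) := by
  have h_centered : HasSubgaussianMGF id v (gaussianReal 0 v) :=
    ⟨integrable_exp_mul_gaussianReal, fun t ↦ by simp [mgf_id_gaussianReal]⟩
  have h_map : (gaussianReal μ v).map (· - μ) = gaussianReal 0 v := by
    rw [gaussianReal_map_sub_const, sub_self]
  exact HasSubgaussianMGF.of_map (measurable_sub_const μ).aemeasurable (h_map ▸ h_centered)

lemma gaussianReal_measureReal_lt_abs_le {d c r : ℝ} {v : NNReal} (hr : 0 ≤ r)
    (hd : |d| ≤ c - r) : (gaussianReal d v).real {x | c < |x|} ≤ 2 * exp (-r ^ 2 / (2 * v)) := by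
  refine (measureReal_mono fun x hx ↦ ?_).trans
    ((hasSubgaussianMGF_sub_gaussianReal d v).measureReal_abs_ge_le hr)
  have hx : c < |x| := hx
  show r ≤ |x - d|
  linarith [abs_sub_abs_le_abs_sub x d]

lemma integral_le_measureReal_add {Ω : Type*} {m : MeasurableSpace Ω} {μ : Measure Ω}
    [IsProbabilityMeasure μ] {f : Ω → ℝ} {S : Set Ω} {c : ℝ} (hS : MeasurableSet S)
    (hf₀ : ∀ ω, 0 ≤ f ω) (hf₁ : ∀ ω, f ω ≤ 1) (hc : 0 ≤ c) (hfc : ∀ ω ∉ S, f ω ≤ c) :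
    ∫ ω, f ω ∂μ ≤ μ.real S + c := by
  have h_int : Integrable (fun ω ↦ S.indicator (fun _ ↦ 1) ω + c) μ :=
    ((integrable_const (1:ℝ)).indicator hS).add (integrable_const c)
  calc ∫ ω, f ω ∂μ ≤ ∫ ω, (S.indicator (fun _ ↦ 1) ω + c) ∂μ := by
        refine integral_mono_of_nonneg (.of_forall hf₀) h_int (.of_forall fun ω ↦ ?_)
        by_cases hω : ω ∈ S
        · simp only [Set.indicator_of_mem hω]
          linarith [hf₁ ω]
        · simp only [Set.indicator_of_notMem hω]
          linarith [hfc ω hω]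
    _ = μ.real S + c := by
        rw [integral_add ((integrable_const (1:ℝ)).indicator hS) (integrable_const c),
          integral_indicator_const _ hS, integral_const, smul_eq_mul, smul_eq_mul, mul_one,
          probReal_univ, one_mul]

lemma gaussianPDFReal_div_gaussianPDFReal_zero {v : NNReal} (hv : v ≠ 0) (m x : ℝ) :
    gaussianPDFReal m v x / gaussianPDFReal 0 v x = exp ((2 * m * x - m ^ 2) / (2 * v)) := by
  have hv' : (v : ℝ) ≠ 0 := NNReal.coe_ne_zero.mpr hv
  simp only [gaussianPDFReal]
  rw [mul_div_mul_left _ _ (by positivity), ← exp_sub]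
  congr 1
  field_simp
  ring

lemma shrinkQ_nonneg (σ b : ℝ) (p : ℕ) (τ x : ℝ) : 0 ≤ shrinkQ σ b p τ x :=
  div_nonneg (gaussianPDFReal_nonneg _ _ _)
    (add_nonneg (gaussianPDFReal_nonneg _ _ _) (gaussianPDFReal_nonneg _ _ _))

lemma shrinkQ_le_one (σ b : ℝ) (p : ℕ) (τ x : ℝ) : shrinkQ σ b p τ x ≤ 1 :=
  div_le_one_of_le₀ (le_add_of_nonneg_left (gaussianPDFReal_nonneg _ _ _))
    (add_nonneg (gaussianPDFReal_nonneg _ _ _) (gaussianPDFReal_nonneg _ _ _))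

lemma shrinkQ_le_rpow {σ b τ δ x : ℝ} {p : ℕ} (hτ : 0 < τ) (hp : 0 < p)
    (ha : 0 ≤ shrinkA σ b)
    (hx : |x| ≤ (shrinkA σ b / 2 - δ) * √(τ * log p / 2)) :
    shrinkQ σ b p τ x ≤ (p : ℝ) ^ (-(shrinkA σ b * δ / 2)) := by
  set a := shrinkA σ b
  set s := √(τ * log p / 2)
  have hlog : 0 ≤ log p := log_natCast_nonneg p
  have hs : s ^ 2 = τ * log p / 2 := sq_sqrt (by positivity)
  have hτ' : τ.toNNReal ≠ 0 := by simpa using hτ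
  have h_exponent : (2 * (a * s) * |x| - (a * s) ^ 2) / (2 * τ) ≤ log p * (-(a * δ / 2)) := by
    rw [div_le_iff₀ (by positivity)]
    have h_mul := mul_le_mul_of_nonneg_left hx (by positivity : 0 ≤ 2 * (a * s))
    have h_sq : a * δ * s ^ 2 = a * δ * (τ * log p / 2) := by rw [hs]
    linarith
  calc shrinkQ σ b p τ x
      ≤ gaussianPDFReal (a * s) τ.toNNReal |x| / gaussianPDFReal 0 τ.toNNReal |x| :=
        div_le_div_of_nonneg_left (gaussianPDFReal_nonneg _ _ _)
          (gaussianPDFReal_pos _ _ _ hτ') (le_add_of_nonneg_right (gaussianPDFReal_nonneg _ _ _))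
    _ = exp ((2 * (a * s) * |x| - (a * s) ^ 2) / (2 * τ)) := by
        rw [gaussianPDFReal_div_gaussianPDFReal_zero hτ', Real.coe_toNNReal _ hτ.le]
    _ ≤ (p : ℝ) ^ (-(a * δ / 2)) := by
        rw [rpow_def_of_pos (by exact_mod_cast hp)]
        exact exp_le_exp.mpr h_exponent

theorem moderate_signal_shrinkage_general (σ b ε : ℝ) (hσ : 0 < σ) (hε : 0 < ε)
    (hεa : ε < shrinkA σ b / 2) :
    ∃ γ > (0 : ℝ), ∃ C > (0 : ℝ), ∀ p : ℕ, 2 ≤ p → ∀ τ : ℝ, 0 < τ → ∀ d : ℝ,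
      |d| ≤ (shrinkA σ b / 2 - ε) * Real.sqrt (τ * Real.log p / 2) →
      ∫ x, shrinkQ σ b p τ x ∂(gaussianReal d (σ * τ).toNNReal) ≤ C * (p : ℝ) ^ (-γ) := by
  set a := shrinkA σ b
  have ha : 0 < a := by linarith
  set γ₁ := a * (ε / 2) / 2
  set γ₂ := ε ^ 2 / (16 * σ) with hγ₂
  refine ⟨min γ₁ γ₂, lt_min (by positivity) (by positivity), 3, by norm_num, ?_⟩
  intro p hp τ hτ d hd
  have hp₁ : (1 : ℝ) ≤ p := by exact_mod_cast one_le_two.trans hp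
  set s := √(τ * log p / 2)
  have hs : s ^ 2 = τ * log p / 2 := sq_sqrt (by have := log_natCast_nonneg p; positivity)
  have h_tail : exp (-(ε / 2 * s) ^ 2 / (2 * (σ * τ).toNNReal)) = (p : ℝ) ^ (-γ₂) := by
    rw [rpow_def_of_pos (by linarith), Real.coe_toNNReal _ (by positivity), mul_pow, hs,
      hγ₂]
    congr 1
    field_simp
    ring
  calc ∫ x, shrinkQ σ b p τ x ∂(gaussianReal d (σ * τ).toNNReal)
      ≤ (gaussianReal d (σ * τ).toNNReal).real {x | (a / 2 - ε / 2) * s < |x|} + p ^ (-γ₁) :=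
        integral_le_measureReal_add (measurableSet_lt measurable_const measurable_abs)
          (shrinkQ_nonneg σ b p τ) (shrinkQ_le_one σ b p τ) (by positivity)
          fun x hx ↦ shrinkQ_le_rpow hτ (by omega) ha.le (not_lt.mp hx)
    _ ≤ 2 * p ^ (-γ₂) + p ^ (-γ₁) := by
        rw [← h_tail]
        gcongr
        exact gaussianReal_measureReal_lt_abs_le (by positivity) (by linarith)
    _ ≤ 3 * p ^ (-min γ₁ γ₂) := by
        have h₁ := rpow_le_rpow_of_exponent_le hp₁ (neg_le_neg (min_le_left γ₁ γ₂))
        have h₂ := rpow_le_rpow_of_exponent_le hp₁ (neg_le_neg (min_le_right γ₁ γ₂))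
        linarith

/-- **Shrinkage factor for moderate signals** (Proposition 1(b), known-variance form).
For `0 < ε < a/2` there are constants `γ, C > 0` depending only on `σ, b, ε` such that for all
`p ≥ 2`, `τ > 0` and `|d| ≤ (a/2 − ε)·√(τ log p / 2)`, if `X ~ N(d, στ)` then
`E[q(X)] ≤ C·p^{−γ}`. -/
theorem moderate_signal_shrinkage (σ b ε : ℝ) (hσ : 0 < σ) (hb : 0 < b) (hε : 0 < ε)
    (hεa : ε < shrinkA σ b / 2) :
    ∃ γ > (0 : ℝ), ∃ C > (0 : ℝ), ∀ p : ℕ, 2 ≤ p → ∀ τ : ℝ, 0 < τ → ∀ d : ℝ,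
      |d| ≤ (shrinkA σ b / 2 - ε) * Real.sqrt (τ * Real.log p / 2) →
      ∫ x, shrinkQ σ b p τ x ∂(gaussianReal d (σ * τ).toNNReal) ≤ C * (p : ℝ) ^ (-γ) :=
  moderate_signal_shrinkage_general σ b ε hσ hε hεa
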